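/- (Well-posedness of the time-delayed sweeping process: uniqueness.) Under assumptions (C1)–(C3) on the moving set C, (SH1)–(SH2) on f, the delay assumption (SH3) and the Lipschitz history assumption (SH4), the time-delayed sweeping process (AP) has at most one solution: if x₁ and x₂ are both solutions of (AP), then x₁(t) = x₂(t) for all t ∈ [−Δ, T]. -/

import Mathlib

open MeasureTheory Set
open scoped RealInnerProductSpace

noncomputable section

/-- The proximal normal cone to a set `S` at a point `x` (empty when `x ∉ S`). -/
def proxNormalCone {n : ℕ} (S : Set (EuclideanSpace ℝ (Fin n)))
    (x : EuclideanSpace ℝ (Fin n)) : Set (EuclideanSpace ℝ (Fin n)) :=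
  {v | x ∈ S ∧ ∃ σ : ℝ, 0 ≤ σ ∧ ∀ y ∈ S, ⟪v, y - x⟫ ≤ σ * ‖y - x‖ ^ 2}

/-- `S` is (uniformly) `r`-prox-regular. -/
def ProxRegular {n : ℕ} (r : ℝ) (S : Set (EuclideanSpace ℝ (Fin n))) : Prop :=
  ∀ x ∈ S, ∀ ζ ∈ proxNormalCone S x, ∀ y ∈ S,
    ⟪ζ, y - x⟫ ≤ (1 / (2 * r)) * ‖y - x‖ ^ 2

/-- A solution of the time-delayed sweeping process (AP): `x` is absolutely
continuous on `[t₀, T]` (with density `x'`), agrees with the history `φ` on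
`[-Δ, t₀]`, stays in the moving set, and satisfies the delayed sweeping
inclusion almost everywhere. -/
def IsAPSolution {n : ℕ} (t₀ T Δ : ℝ)
    (C : ℝ → Set (EuclideanSpace ℝ (Fin n)))
    (f : ℝ → EuclideanSpace ℝ (Fin n) → EuclideanSpace ℝ (Fin n) →
      EuclideanSpace ℝ (Fin n))
    (δ : ℝ → ℝ) (φ : ℝ → EuclideanSpace ℝ (Fin n))
    (x x' : ℝ → EuclideanSpace ℝ (Fin n)) : Prop :=
  IntervalIntegrable x' volume t₀ T ∧
  (∀ t ∈ Icc t₀ T, x t = x t₀ + ∫ s in t₀..t, x' s) ∧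
  (∀ s ∈ Icc (-Δ) t₀, x s = φ s) ∧
  (∀ t ∈ Icc t₀ T, x t ∈ C t) ∧
  (∀ᵐ t ∂volume, t ∈ Icc t₀ T →
    -x' t - f t (x t) (x (t - δ t)) ∈ proxNormalCone (C t) (x t))

set_option maxHeartbeats 1000000 in
lemma primitive_norm_sq_eq {n : ℕ} {f : ℝ → EuclideanSpace ℝ (Fin n)} {a t : ℝ} (hat : a ≤ t)
    (hf : IntervalIntegrable f volume a t) :
    ‖∫ s in a..t, f s‖ ^ 2 = 2 * ∫ s in a..t, ⟪∫ u in a..s, f u, f s⟫ := by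
  have hfI : IntegrableOn f (Ioc a t) volume :=
    (intervalIntegrable_iff_integrableOn_Ioc_of_le hat).1 hf
  set μ := volume.restrict (Ioc a t) with hμdef
  have hfμ : Integrable f μ := hfI
  have hGmeas : AEStronglyMeasurable (fun p : ℝ × ℝ => (⟪f p.1, f p.2⟫ : ℝ)) (μ.prod μ) :=
    (hfμ.aestronglyMeasurable.comp_fst).inner (hfμ.aestronglyMeasurable.comp_snd)
  have hGint : Integrable (fun p : ℝ × ℝ => (⟪f p.1, f p.2⟫ : ℝ)) (μ.prod μ) := by
    refine Integrable.mono' (hfμ.norm.mul_prod hfμ.norm) hGmeas ?_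
    exact Filter.Eventually.of_forall fun p => by
      simpa [Real.norm_eq_abs] using abs_real_inner_le_norm (f p.1) (f p.2)
  set L : Set (ℝ × ℝ) := {p | p.2 ≤ p.1} with hLdef
  set U : Set (ℝ × ℝ) := {p | p.1 < p.2} with hUdef
  have hLmeas : MeasurableSet L := measurableSet_le measurable_snd measurable_fst
  have hUmeas : MeasurableSet U := measurableSet_lt measurable_fst measurable_snd
  have hLint : Integrable (L.indicator fun p : ℝ × ℝ => (⟪f p.1, f p.2⟫ : ℝ)) (μ.prod μ) :=
    hGint.indicator hLmeas
  have hUint : Integrable (U.indicator fun p : ℝ × ℝ => (⟪f p.1, f p.2⟫ : ℝ)) (μ.prod μ) :=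
    hGint.indicator hUmeas
  -- pointwise splitting
  have hsplit : (fun p : ℝ × ℝ => (⟪f p.1, f p.2⟫ : ℝ))
      = (fun p => (L.indicator fun p : ℝ × ℝ => (⟪f p.1, f p.2⟫ : ℝ)) p
          + (U.indicator fun p : ℝ × ℝ => (⟪f p.1, f p.2⟫ : ℝ)) p) := by
    funext p
    by_cases h : p.2 ≤ p.1
    · have h' : ¬ p.1 < p.2 := not_lt.2 h
      simp [hLdef, hUdef, Set.indicator_apply, h, h']
    · have h' : p.1 < p.2 := lt_of_not_ge h
      simp [hLdef, hUdef, Set.indicator_apply, h, h']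
  -- value of the product integral
  have hprod : ∫ p, (⟪f p.1, f p.2⟫ : ℝ) ∂(μ.prod μ)
      = (∫ p, (L.indicator fun p : ℝ × ℝ => (⟪f p.1, f p.2⟫ : ℝ)) p ∂(μ.prod μ))
        + ∫ p, (U.indicator fun p : ℝ × ℝ => (⟪f p.1, f p.2⟫ : ℝ)) p ∂(μ.prod μ) := by
    rw [← integral_add hLint hUint]
    exact integral_congr_ae (Filter.Eventually.of_forall fun p => by
      conv_lhs => rw [hsplit])
  -- the product integral is the square of the norm
  have hFt : (⟪∫ u, f u ∂μ, ∫ u, f u ∂μ⟫ : ℝ) = ∫ p, (⟪f p.1, f p.2⟫ : ℝ) ∂(μ.prod μ) := by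
    rw [MeasureTheory.integral_prod _ hGint]
    have h1 : ∀ s : ℝ, ∫ u, (⟪f s, f u⟫ : ℝ) ∂μ = ⟪f s, ∫ u, f u ∂μ⟫ := fun s =>
      integral_inner hfμ (f s)
    simp_rw [h1]
    have h2 : (fun s => (⟪f s, ∫ u, f u ∂μ⟫ : ℝ)) = fun s => ⟪∫ u, f u ∂μ, f s⟫ :=
      funext fun s => real_inner_comm _ _
    rw [h2, integral_inner hfμ]
  -- the lower-triangle term
  have hA : ∫ p, (L.indicator fun p : ℝ × ℝ => (⟪f p.1, f p.2⟫ : ℝ)) p ∂(μ.prod μ)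
      = ∫ s, (⟪∫ u in Ioc a s, f u, f s⟫ : ℝ) ∂μ := by
    rw [MeasureTheory.integral_prod _ hLint]
    refine integral_congr_ae ?_
    filter_upwards [ae_restrict_mem measurableSet_Ioc] with s hs
    have hind : ∀ u : ℝ, (L.indicator fun p : ℝ × ℝ => (⟪f p.1, f p.2⟫ : ℝ)) (s, u)
        = (Iic s).indicator (fun u => (⟪f s, f u⟫ : ℝ)) u := by
      intro u; simp [hLdef, Set.indicator_apply]
    simp_rw [hind]
    rw [hμdef, MeasureTheory.setIntegral_indicator measurableSet_Iic]
    have hset : Ioc a t ∩ Iic s = Ioc a s := by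
      ext u; constructor
      · rintro ⟨⟨h1, _⟩, h2⟩; exact ⟨h1, h2⟩
      · rintro ⟨h1, h2⟩; exact ⟨⟨h1, le_trans h2 hs.2⟩, h2⟩
    rw [hset]
    have hfs : Integrable f (volume.restrict (Ioc a s)) :=
      hfI.mono_set (Ioc_subset_Ioc_right hs.2)
    rw [integral_inner hfs (f s), real_inner_comm]
  -- the upper-triangle term, via Fubini
  have hB : ∫ p, (U.indicator fun p : ℝ × ℝ => (⟪f p.1, f p.2⟫ : ℝ)) p ∂(μ.prod μ)
      = ∫ u, (⟪∫ w in Ioc a u, f w, f u⟫ : ℝ) ∂μ := by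
    rw [MeasureTheory.integral_prod _ hUint]
    rw [MeasureTheory.integral_integral_swap (by exact hUint)]
    refine integral_congr_ae ?_
    filter_upwards [ae_restrict_mem measurableSet_Ioc] with u hu
    have hind : ∀ s : ℝ, (U.indicator fun p : ℝ × ℝ => (⟪f p.1, f p.2⟫ : ℝ)) (s, u)
        = (Iio u).indicator (fun s => (⟪f s, f u⟫ : ℝ)) s := by
      intro s; simp [hUdef, Set.indicator_apply]
    simp_rw [hind]
    rw [hμdef, MeasureTheory.setIntegral_indicator measurableSet_Iio]
    have hset : Ioc a t ∩ Iio u = Ioo a u := by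
      ext w; constructor
      · rintro ⟨⟨h1, _⟩, h2⟩; exact ⟨h1, h2⟩
      · rintro ⟨h1, h2⟩; exact ⟨⟨h1, le_trans h2.le hu.2⟩, h2⟩
    rw [hset, ← MeasureTheory.integral_Ioc_eq_integral_Ioo]
    have hfs : Integrable f (volume.restrict (Ioc a u)) :=
      hfI.mono_set (Ioc_subset_Ioc_right hu.2)
    have h3 : (fun s => (⟪f s, f u⟫ : ℝ)) = fun s => ⟪f u, f s⟫ :=
      funext fun s => real_inner_comm _ _
    rw [h3, integral_inner hfs (f u), real_inner_comm]
  -- put everything together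
  have hmain : (⟪∫ u, f u ∂μ, ∫ u, f u ∂μ⟫ : ℝ) = 2 * ∫ s, (⟪∫ u in Ioc a s, f u, f s⟫ : ℝ) ∂μ := by
    rw [hFt, hprod, hA, hB]; ring
  have hFt2 : (∫ s in a..t, f s) = ∫ u, f u ∂μ := intervalIntegral.integral_of_le hat
  rw [hFt2, ← real_inner_self_eq_norm_sq, hmain]
  congr 1
  rw [intervalIntegral.integral_of_le hat]
  refine integral_congr_ae ?_
  filter_upwards [ae_restrict_mem measurableSet_Ioc] with s hs
  rw [intervalIntegral.integral_of_le hs.1.le]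

set_option maxHeartbeats 2000000 in
/-- Well-posedness of the time-delayed sweeping process (AP):
uniqueness of solutions. -/
theorem stmt2 {n : ℕ} (t₀ T : ℝ) (ht₀ : 0 ≤ t₀) (hT : t₀ < T)
    (C : ℝ → Set (EuclideanSpace ℝ (Fin n)))
    (r : ℝ) (hr : 0 < r)
    (v v' : ℝ → ℝ)
    (f : ℝ → EuclideanSpace ℝ (Fin n) → EuclideanSpace ℝ (Fin n) →
      EuclideanSpace ℝ (Fin n))
    (β δ : ℝ → ℝ) (Δ : ℝ) (φ : ℝ → EuclideanSpace ℝ (Fin n))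
    -- (C1)
    (hC1 : ∀ t ∈ Icc t₀ T, (C t).Nonempty ∧ IsClosed (C t))
    -- (C2)
    (hv'int : IntervalIntegrable v' volume t₀ T)
    (hvAC : ∀ t ∈ Icc t₀ T, v t = v t₀ + ∫ s in t₀..t, v' s)
    (hC2 : ∀ y : EuclideanSpace ℝ (Fin n), ∀ s ∈ Icc t₀ T, ∀ t ∈ Icc t₀ T,
      |Metric.infDist y (C t) - Metric.infDist y (C s)| ≤ |v t - v s|)
    -- (C3)
    (hC3 : ∀ t ∈ Icc t₀ T, ProxRegular r (C t))
    -- (SH1)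
    (hfmeas : ∀ x y : EuclideanSpace ℝ (Fin n), Measurable fun t => f t x y)
    (hflip : ∀ η : ℝ, 0 < η → ∃ k : ℝ → ℝ, IntervalIntegrable k volume t₀ T ∧
      ∀ t ∈ Icc t₀ T, ∀ x₁ y₁ x₂ y₂ : EuclideanSpace ℝ (Fin n),
        ‖x₁‖ ≤ η → ‖y₁‖ ≤ η → ‖x₂‖ ≤ η → ‖y₂‖ ≤ η →
        ‖f t x₁ y₁ - f t x₂ y₂‖ ≤ k t * (‖x₁ - x₂‖ + ‖y₁ - y₂‖))
    -- (SH2)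
    (hβint : IntervalIntegrable β volume t₀ T)
    (hβ0 : ∀ t ∈ Icc t₀ T, 0 ≤ β t)
    (hgrowth : ∀ t ∈ Icc t₀ T, ∀ x ∈ ⋃ s ∈ Icc t₀ T, C s,
      ∀ y : EuclideanSpace ℝ (Fin n), ‖f t x y‖ ≤ β t * (1 + ‖x‖ + ‖y‖))
    -- (SH3)
    (hδlip : ∃ K : NNReal, LipschitzOnWith K δ (Icc t₀ T))
    (hδmono : AntitoneOn δ (Icc t₀ T))
    (hδ0 : ∀ t ∈ Icc t₀ T, 0 ≤ δ t)
    (hΔpos : 0 < Δ)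
    (hΔub : ∀ t ∈ Icc t₀ T, δ t ≤ Δ)
    (hΔmax : ∃ t ∈ Icc t₀ T, δ t = Δ)
    -- (SH4)
    (hφlip : ∃ K : NNReal, LipschitzOnWith K φ (Icc (-Δ) t₀))
    (hx₀ : φ t₀ ∈ C t₀)
    -- two solutions of (AP)
    (x₁ x₁' x₂ x₂' : ℝ → EuclideanSpace ℝ (Fin n))
    (hx₁ : IsAPSolution t₀ T Δ C f δ φ x₁ x₁')
    (hx₂ : IsAPSolution t₀ T Δ C f δ φ x₂ x₂') :
    ∀ t ∈ Icc (-Δ) T, x₁ t = x₂ t := by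
  obtain ⟨hx₁'int, hx₁AC, hx₁hist, hx₁mem, hx₁incl⟩ := hx₁
  obtain ⟨hx₂'int, hx₂AC, hx₂hist, hx₂mem, hx₂incl⟩ := hx₂
  have hΔt₀ : -Δ ≤ t₀ := le_trans (neg_nonpos.2 hΔpos.le) ht₀
  set d : ℝ → EuclideanSpace ℝ (Fin n) := fun s => x₁ s - x₂ s with hddef
  set d' : ℝ → EuclideanSpace ℝ (Fin n) := fun s => x₁' s - x₂' s with hd'def
  have hd'int : IntervalIntegrable d' volume t₀ T := hx₁'int.sub hx₂'int
  have hx₁t₀ : x₁ t₀ = φ t₀ := hx₁hist t₀ ⟨hΔt₀, le_rfl⟩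
  have hx₂t₀ : x₂ t₀ = φ t₀ := hx₂hist t₀ ⟨hΔt₀, le_rfl⟩
  have hsubuIcc : ∀ t ∈ Icc t₀ T, uIcc t₀ t ⊆ uIcc t₀ T := by
    intro t ht
    rw [uIcc_of_le ht.1, uIcc_of_le hT.le]
    exact Icc_subset_Icc le_rfl ht.2
  -- d is the primitive of d' on [t₀, T]
  have hdrep : ∀ t ∈ Icc t₀ T, d t = ∫ s in t₀..t, d' s := by
    intro t ht
    have h1 := hx₁AC t ht
    have h2 := hx₂AC t ht
    have hsub : uIcc t₀ t ⊆ uIcc t₀ T := hsubuIcc t ht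
    rw [hddef]
    simp only [h1, h2, hx₁t₀, hx₂t₀, hd'def]
    rw [intervalIntegral.integral_sub (hx₁'int.mono_set hsub) (hx₂'int.mono_set hsub)]
    abel
  -- continuity of x₁, x₂, d on [t₀, T]
  have hprimcont : ∀ g : ℝ → EuclideanSpace ℝ (Fin n), IntervalIntegrable g volume t₀ T →
      ContinuousOn (fun t => ∫ s in t₀..t, g s) (Icc t₀ T) := by
    intro g hg
    have := intervalIntegral.continuousOn_primitive_interval' hg (left_mem_uIcc)
    rwa [uIcc_of_le hT.le] at this
  have hx₁cont : ContinuousOn x₁ (Icc t₀ T) := by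
    have hc : ContinuousOn (fun t => x₁ t₀ + ∫ s in t₀..t, x₁' s) (Icc t₀ T) :=
      continuousOn_const.add (hprimcont x₁' hx₁'int)
    exact hc.congr fun t ht => hx₁AC t ht
  have hx₂cont : ContinuousOn x₂ (Icc t₀ T) := by
    have hc : ContinuousOn (fun t => x₂ t₀ + ∫ s in t₀..t, x₂' s) (Icc t₀ T) :=
      continuousOn_const.add (hprimcont x₂' hx₂'int)
    exact hc.congr fun t ht => hx₂AC t ht
  have hdcont : ContinuousOn d (Icc t₀ T) := hx₁cont.sub hx₂cont
  -- global sup bounds, to feed the local Lipschitz hypothesis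
  obtain ⟨M₁, hM₁⟩ := isCompact_Icc.exists_bound_of_continuousOn hx₁cont
  obtain ⟨M₂, hM₂⟩ := isCompact_Icc.exists_bound_of_continuousOn hx₂cont
  obtain ⟨Kφ, hφl⟩ := hφlip
  have hφcont : ContinuousOn φ (Icc (-Δ) t₀) := hφl.continuousOn
  obtain ⟨Mφ, hMφ⟩ := isCompact_Icc.exists_bound_of_continuousOn hφcont
  set η : ℝ := max (max M₁ M₂) Mφ + 1 with hηdef
  have hM₁0 : (0:ℝ) ≤ M₁ := le_trans (norm_nonneg _) (hM₁ t₀ ⟨le_rfl, hT.le⟩)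
  have hη : 0 < η := by
    have : (0:ℝ) ≤ max (max M₁ M₂) Mφ := le_trans hM₁0 (le_trans (le_max_left _ _) (le_max_left _ _))
    linarith
  have hb₁ : ∀ s ∈ Icc (-Δ) T, ‖x₁ s‖ ≤ η := by
    intro s hs
    rcases le_total s t₀ with h | h
    · rw [hx₁hist s ⟨hs.1, h⟩]
      have := hMφ s ⟨hs.1, h⟩
      have h2 : Mφ ≤ max (max M₁ M₂) Mφ := le_max_right _ _
      linarith
    · have := hM₁ s ⟨h, hs.2⟩
      have h2 : M₁ ≤ max (max M₁ M₂) Mφ := le_trans (le_max_left _ _) (le_max_left _ _)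
      linarith
  have hb₂ : ∀ s ∈ Icc (-Δ) T, ‖x₂ s‖ ≤ η := by
    intro s hs
    rcases le_total s t₀ with h | h
    · rw [hx₂hist s ⟨hs.1, h⟩]
      have := hMφ s ⟨hs.1, h⟩
      have h2 : Mφ ≤ max (max M₁ M₂) Mφ := le_max_right _ _
      linarith
    · have := hM₂ s ⟨h, hs.2⟩
      have h2 : M₂ ≤ max (max M₁ M₂) Mφ := le_trans (le_max_right _ _) (le_max_left _ _)
      linarith
  obtain ⟨k, hkint, hk⟩ := hflip η hη
  set a : ℝ → ℝ := fun s => 1 / r + 2 * ‖k s‖ with hadef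
  have haint : IntervalIntegrable a volume t₀ T :=
    intervalIntegrable_const.add (hkint.norm.const_mul 2)
  have ha0 : ∀ s, 0 ≤ a s := fun s => by
    have : (0:ℝ) ≤ 1 / r := by positivity
    have h2 : (0:ℝ) ≤ 2 * ‖k s‖ := by positivity
    simp only [hadef]; linarith
  -- the delayed point stays in [-Δ, s]
  have hτ : ∀ s ∈ Icc t₀ T, s - δ s ∈ Icc (-Δ) T ∧ s - δ s ≤ s := by
    intro s hs
    have h1 : δ s ≤ Δ := hΔub s hs
    have h2 : 0 ≤ δ s := hδ0 s hs
    constructor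
    · constructor
      · have : t₀ - Δ ≤ s - δ s := by linarith [hs.1]
        linarith
      · linarith [hs.2]
    · linarith
  -- vanishing on the history
  have hdhist : ∀ s ∈ Icc (-Δ) t₀, d s = 0 := by
    intro s hs
    simp only [hddef, hx₁hist s hs, hx₂hist s hs, sub_self]
  -- integrability of ⟪d, d'⟫
  obtain ⟨Md, hMd⟩ := isCompact_Icc.exists_bound_of_continuousOn hdcont
  have hhint : IntervalIntegrable (fun s => (⟪d s, d' s⟫ : ℝ)) volume t₀ T := by
    rw [intervalIntegrable_iff_integrableOn_Ioc_of_le hT.le]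
    have hd'I : IntegrableOn d' (Ioc t₀ T) volume :=
      (intervalIntegrable_iff_integrableOn_Ioc_of_le hT.le).1 hd'int
    refine Integrable.mono' (hd'I.norm.const_mul Md) ?_ ?_
    · exact ((hdcont.mono Ioc_subset_Icc_self).aestronglyMeasurable
        measurableSet_Ioc).inner hd'I.aestronglyMeasurable
    · filter_upwards [ae_restrict_mem measurableSet_Ioc] with s hs
      calc ‖(⟪d s, d' s⟫ : ℝ)‖ ≤ ‖d s‖ * ‖d' s‖ := by
            simpa [Real.norm_eq_abs] using abs_real_inner_le_norm (d s) (d' s)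
        _ ≤ Md * ‖d' s‖ :=
            mul_le_mul_of_nonneg_right (hMd s (Ioc_subset_Icc_self hs)) (norm_nonneg _)
  -- the a.e. differential inequality
  have hae : ∀ᵐ s ∂volume, s ∈ Icc t₀ T →
      (⟪d s, d' s⟫ : ℝ) ≤ (1 / r) * ‖d s‖ ^ 2
        + ‖k s‖ * ((‖d s‖ + ‖d (s - δ s)‖) * ‖d s‖) := by
    filter_upwards [hx₁incl, hx₂incl] with s h1 h2 hs
    set τ := s - δ s with hτdef
    have hτm := hτ s hs
    have hm₁ := hx₁mem s hs
    have hm₂ := hx₂mem s hs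
    have hsIcc : s ∈ Icc (-Δ) T := ⟨le_trans hΔt₀ hs.1, hs.2⟩
    have p1 := hC3 s hs (x₁ s) hm₁ _ (h1 hs) (x₂ s) hm₂
    have p2 := hC3 s hs (x₂ s) hm₂ _ (h2 hs) (x₁ s) hm₁
    set F₁ := f s (x₁ s) (x₁ τ) with hF₁
    set F₂ := f s (x₂ s) (x₂ τ) with hF₂
    have halg : (⟪-x₁' s - F₁, x₂ s - x₁ s⟫ : ℝ) + ⟪-x₂' s - F₂, x₁ s - x₂ s⟫
        = ⟪d' s, d s⟫ + ⟪F₁ - F₂, d s⟫ := by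
      simp only [hddef, hd'def, inner_sub_left, inner_sub_right, inner_neg_left]
      ring
    have hnorm_eq : ‖x₂ s - x₁ s‖ = ‖d s‖ := by rw [hddef]; exact norm_sub_rev _ _
    have hnorm_eq2 : ‖x₁ s - x₂ s‖ = ‖d s‖ := rfl
    have hsum : (⟪d' s, d s⟫ : ℝ) + ⟪F₁ - F₂, d s⟫ ≤ (1 / r) * ‖d s‖ ^ 2 := by
      rw [← halg]
      have : (1 / (2 * r)) * ‖x₂ s - x₁ s‖ ^ 2 + (1 / (2 * r)) * ‖x₁ s - x₂ s‖ ^ 2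
          = (1 / r) * ‖d s‖ ^ 2 := by
        rw [hnorm_eq, hnorm_eq2]; field_simp; ring
      linarith [p1, p2]
    -- bound on ‖F₁ - F₂‖
    have hFbound : ‖F₁ - F₂‖ ≤ ‖k s‖ * (‖d s‖ + ‖d τ‖) := by
      have := hk s hs (x₁ s) (x₁ τ) (x₂ s) (x₂ τ)
        (hb₁ s hsIcc) (hb₁ τ hτm.1) (hb₂ s hsIcc) (hb₂ τ hτm.1)
      refine le_trans this ?_
      have hnn : (0:ℝ) ≤ ‖x₁ s - x₂ s‖ + ‖x₁ τ - x₂ τ‖ :=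
        add_nonneg (norm_nonneg _) (norm_nonneg _)
      have : k s ≤ ‖k s‖ := le_abs_self _
      calc k s * (‖x₁ s - x₂ s‖ + ‖x₁ τ - x₂ τ‖)
          ≤ ‖k s‖ * (‖x₁ s - x₂ s‖ + ‖x₁ τ - x₂ τ‖) := mul_le_mul_of_nonneg_right this hnn
        _ = ‖k s‖ * (‖d s‖ + ‖d τ‖) := rfl
    have hCS : -(⟪F₁ - F₂, d s⟫ : ℝ) ≤ ‖k s‖ * ((‖d s‖ + ‖d τ‖) * ‖d s‖) := by
      have h1' : -(⟪F₁ - F₂, d s⟫ : ℝ) ≤ ‖F₁ - F₂‖ * ‖d s‖ := by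
        have := abs_real_inner_le_norm (F₁ - F₂) (d s)
        have := neg_abs_le (⟪F₁ - F₂, d s⟫ : ℝ)
        nlinarith [abs_real_inner_le_norm (F₁ - F₂) (d s), neg_abs_le (⟪F₁ - F₂, d s⟫ : ℝ)]
      refine le_trans h1' ?_
      calc ‖F₁ - F₂‖ * ‖d s‖ ≤ (‖k s‖ * (‖d s‖ + ‖d τ‖)) * ‖d s‖ :=
            mul_le_mul_of_nonneg_right hFbound (norm_nonneg _)
        _ = ‖k s‖ * ((‖d s‖ + ‖d τ‖) * ‖d s‖) := by ring
    have : (⟪d' s, d s⟫ : ℝ) ≤ (1 / r) * ‖d s‖ ^ 2 + ‖k s‖ * ((‖d s‖ + ‖d τ‖) * ‖d s‖) := by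
      linarith [hsum, hCS]
    rwa [real_inner_comm] at this

  -- local propagation step
  have key : ∀ m ∈ Ico t₀ T, (∀ s ∈ Icc (-Δ) m, d s = 0) →
      ∃ ε > 0, m + ε ≤ T ∧ ∀ u ∈ Icc m (m + ε), d u = 0 := by
    intro m hm hm0
    have hmT : m ≤ T := hm.2.le
    have haint' : IntervalIntegrable a volume m T :=
      haint.mono_set (by rw [uIcc_of_le hmT, uIcc_of_le hT.le]; exact Icc_subset_Icc hm.1 le_rfl)
    have hAcont : ContinuousOn (fun t => ∫ s in m..t, a s) (Icc m T) := by
      have := intervalIntegral.continuousOn_primitive_interval' haint' left_mem_uIcc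
      rwa [uIcc_of_le hmT] at this
    have hAm : (∫ s in m..m, a s) = 0 := intervalIntegral.integral_same
    have hcw := hAcont m ⟨le_rfl, hmT⟩
    rw [Metric.continuousWithinAt_iff] at hcw
    obtain ⟨δ₀, hδ₀pos, hδ₀⟩ := hcw (1/4) (by norm_num)
    set ε := min (δ₀ / 2) (T - m) with hεdef
    have hεpos : 0 < ε := lt_min (by linarith) (by linarith [hm.2])
    have hmεT : m + ε ≤ T := by
      have : ε ≤ T - m := min_le_right _ _
      linarith
    refine ⟨ε, hεpos, hmεT, ?_⟩
    have hAbound : ∀ t ∈ Icc m (m + ε), (∫ s in m..t, a s) ≤ 1/4 := by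
      intro t ht
      have h1 : dist t m < δ₀ := by
        rw [Real.dist_eq, abs_of_nonneg (by linarith [ht.1])]
        have : ε ≤ δ₀ / 2 := min_le_left _ _
        linarith [ht.2]
      have h2 := hδ₀ ⟨ht.1, le_trans ht.2 hmεT⟩ h1
      rw [Real.dist_eq, hAm, sub_zero] at h2
      exact le_of_lt (lt_of_le_of_lt (le_abs_self _) h2)
    have hsub1 : Icc m (m + ε) ⊆ Icc t₀ T := Icc_subset_Icc hm.1 hmεT
    obtain ⟨sm, hsmmem, hsmmax⟩ := isCompact_Icc.exists_isMaxOn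
      (nonempty_Icc.2 (by linarith)) ((hdcont.mono hsub1).norm)
    set W := ‖d sm‖ with hWdef
    have hW0 : 0 ≤ W := norm_nonneg _
    have hWb : ∀ u ∈ Icc m (m + ε), ‖d u‖ ≤ W := fun u hu => hsmmax hu
    have hsmIcc : sm ∈ Icc t₀ T := hsub1 hsmmem
    have ht₀sm : t₀ ≤ sm := hsmIcc.1
    have h2int : IntervalIntegrable (fun s => (⟪d s, d' s⟫ : ℝ)) volume t₀ m :=
      hhint.mono_set (hsubuIcc m ⟨hm.1, hmT⟩)
    have hsubm : uIcc m sm ⊆ uIcc t₀ T := by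
      rw [uIcc_of_le hsmmem.1, uIcc_of_le hT.le]
      exact Icc_subset_Icc hm.1 hsmIcc.2
    have h3int : IntervalIntegrable (fun s => (⟪d s, d' s⟫ : ℝ)) volume m sm :=
      hhint.mono_set hsubm
    have hid : ‖d sm‖ ^ 2 = 2 * ∫ s in t₀..sm, (⟪d s, d' s⟫ : ℝ) := by
      rw [hdrep sm hsmIcc,
        primitive_norm_sq_eq ht₀sm (hd'int.mono_set (hsubuIcc sm hsmIcc))]
      congr 1
      apply intervalIntegral.integral_congr
      intro s hs
      rw [uIcc_of_le ht₀sm] at hs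
      have := hdrep s ⟨hs.1, le_trans hs.2 hsmIcc.2⟩
      simp only [← this]
    have hsplit : ∫ s in t₀..sm, (⟪d s, d' s⟫ : ℝ)
        = (∫ s in t₀..m, (⟪d s, d' s⟫ : ℝ)) + ∫ s in m..sm, (⟪d s, d' s⟫ : ℝ) :=
      (intervalIntegral.integral_add_adjacent_intervals h2int h3int).symm
    have hzero : (∫ s in t₀..m, (⟪d s, d' s⟫ : ℝ)) = 0 := by
      have heq : EqOn (fun s => (⟪d s, d' s⟫ : ℝ)) (fun _ => (0 : ℝ)) (uIcc t₀ m) := by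
        intro s hs
        rw [uIcc_of_le hm.1] at hs
        have hds : d s = 0 := hm0 s ⟨le_trans hΔt₀ hs.1, hs.2⟩
        simp [hds]
      rw [intervalIntegral.integral_congr heq, intervalIntegral.integral_zero]
    have haintm : IntervalIntegrable a volume m sm :=
      haint.mono_set hsubm
    have hintmono : (∫ s in m..sm, (⟪d s, d' s⟫ : ℝ)) ≤ ∫ s in m..sm, a s * W ^ 2 := by
      refine intervalIntegral.integral_mono_ae_restrict hsmmem.1 h3int
        (haintm.mul_const (W ^ 2)) ?_
      have hae' : ∀ᵐ s ∂(volume.restrict (Icc m sm)), s ∈ Icc t₀ T →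
          (⟪d s, d' s⟫ : ℝ) ≤ (1 / r) * ‖d s‖ ^ 2
            + ‖k s‖ * ((‖d s‖ + ‖d (s - δ s)‖) * ‖d s‖) := ae_restrict_of_ae hae
      filter_upwards [hae', ae_restrict_mem measurableSet_Icc] with s hineq hs
      have hsIcc2 : s ∈ Icc t₀ T := ⟨le_trans hm.1 hs.1, le_trans hs.2 hsmIcc.2⟩
      have hds : ‖d s‖ ≤ W := hWb s ⟨hs.1, le_trans hs.2 hsmmem.2⟩
      have hdτ : ‖d (s - δ s)‖ ≤ W := by
        rcases le_or_gt (s - δ s) m with h | h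
        · have h0 : d (s - δ s) = 0 := hm0 _ ⟨(hτ s hsIcc2).1.1, h⟩
          rw [h0]; simpa using hW0
        · exact hWb _ ⟨h.le, le_trans (hτ s hsIcc2).2 (le_trans hs.2 hsmmem.2)⟩
      have hknn : (0 : ℝ) ≤ ‖k s‖ := norm_nonneg _
      have h3 : (0 : ℝ) < 1 / r := by positivity
      calc (⟪d s, d' s⟫ : ℝ)
          ≤ (1 / r) * ‖d s‖ ^ 2 + ‖k s‖ * ((‖d s‖ + ‖d (s - δ s)‖) * ‖d s‖) := hineq hsIcc2
        _ ≤ a s * W ^ 2 := by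
            have h1 : ‖d s‖ ^ 2 ≤ W ^ 2 := by nlinarith [norm_nonneg (d s)]
            have h2 : (‖d s‖ + ‖d (s - δ s)‖) * ‖d s‖ ≤ (2 * W) * W := by
              nlinarith [norm_nonneg (d s)]
            have h4 := mul_le_mul_of_nonneg_left h2 hknn
            have h5 := mul_le_mul_of_nonneg_left h1 h3.le
            simp only [hadef]
            nlinarith
    have hval : (∫ s in m..sm, a s * W ^ 2) ≤ 1 / 4 * W ^ 2 := by
      rw [intervalIntegral.integral_mul_const]
      have := hAbound sm hsmmem
      nlinarith [sq_nonneg W]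
    have hWzero : W = 0 := by
      have hWsq : W ^ 2 = 2 * ∫ s in m..sm, (⟪d s, d' s⟫ : ℝ) := by
        rw [hWdef, hid, hsplit, hzero]; ring
      have hfin : W ^ 2 ≤ 1 / 2 * W ^ 2 := by
        rw [hWsq]
        have := le_trans hintmono hval
        linarith
      nlinarith [hW0]
    intro u hu
    have h1 : ‖d u‖ ≤ 0 := hWzero ▸ hWb u hu
    exact norm_le_zero_iff.1 h1
  -- continuous induction via the supremum
  set S : Set ℝ := {t | t ∈ Icc t₀ T ∧ ∀ s ∈ Icc t₀ t, d s = 0} with hSdef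
  have ht₀S : t₀ ∈ S := ⟨⟨le_rfl, hT.le⟩, fun s hs => by
    have hst : s = t₀ := le_antisymm hs.2 hs.1
    rw [hst]; exact hdhist t₀ ⟨hΔt₀, le_rfl⟩⟩
  have hSne : S.Nonempty := ⟨t₀, ht₀S⟩
  have hSbdd : BddAbove S := ⟨T, fun t ht => ht.1.2⟩
  set m := sSup S with hmdef
  have ht₀m : t₀ ≤ m := le_csSup hSbdd ht₀S
  have hmT : m ≤ T := csSup_le hSne fun t ht => ht.1.2
  have hm0' : ∀ s ∈ Ico t₀ m, d s = 0 := by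
    intro s hs
    obtain ⟨t, htS, hst⟩ := exists_lt_of_lt_csSup hSne hs.2
    exact htS.2 s ⟨hs.1, hst.le⟩
  have hdm : d m = 0 := by
    rcases eq_or_lt_of_le ht₀m with h | h
    · rw [← h]; exact hdhist t₀ ⟨hΔt₀, le_rfl⟩
    · have hne : (nhdsWithin m (Ico t₀ m)).NeBot := by
        rw [← mem_closure_iff_nhdsWithin_neBot, closure_Ico h.ne]
        exact ⟨ht₀m, le_rfl⟩
      have htd : Filter.Tendsto d (nhdsWithin m (Ico t₀ m)) (nhds (d m)) :=
        (hdcont m ⟨ht₀m, hmT⟩).mono_left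
          (nhdsWithin_mono m fun x hx => ⟨hx.1, le_trans hx.2.le hmT⟩)
      have htd0 : Filter.Tendsto d (nhdsWithin m (Ico t₀ m)) (nhds 0) := by
        refine Filter.Tendsto.congr' ?_ tendsto_const_nhds
        exact Filter.EventuallyEq.symm
          (eventually_nhdsWithin_of_forall fun s hs => hm0' s hs)
      exact tendsto_nhds_unique htd htd0
  have hm0 : ∀ s ∈ Icc (-Δ) m, d s = 0 := by
    intro s hs
    rcases le_total s t₀ with h | h
    · exact hdhist s ⟨hs.1, h⟩
    · rcases lt_or_eq_of_le hs.2 with h2 | h2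
      · exact hm0' s ⟨h, h2⟩
      · rw [h2]; exact hdm
  have hmist : m = T := by
    by_contra hnem
    have hmltT : m < T := lt_of_le_of_ne hmT hnem
    obtain ⟨ε, hεpos, hmεT, hεz⟩ := key m ⟨ht₀m, hmltT⟩ hm0
    have hmem : m + ε ∈ S := by
      refine ⟨⟨by linarith, hmεT⟩, ?_⟩
      intro s hs
      rcases le_total s m with h | h
      · exact hm0 s ⟨le_trans hΔt₀ hs.1, h⟩
      · exact hεz s ⟨h, hs.2⟩
    have := le_csSup hSbdd hmem
    linarith
  intro t ht
  rcases le_total t t₀ with h | h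
  · rw [hx₁hist t ⟨ht.1, h⟩, hx₂hist t ⟨ht.1, h⟩]
  · have hdt : d t = 0 := by
      apply hm0 t ⟨le_trans hΔt₀ h, ?_⟩
      rw [hmist]; exact ht.2
    have h2 : x₁ t - x₂ t = 0 := hdt
    exact sub_eq_zero.1 h2
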